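/- Let d ≥ 1, let v : ℝ × ℝ^d → ℝ^d be jointly C¹, and let φ be a flow of v that is jointly C². Then for all (t,x), det(Dφ(t,x)) = exp(∫₀ᵗ (div v)(s, φ(s,x)) ds), where (div v)(s,y) denotes the trace of the spatial derivative of v(s,·) at y. In particular det(Dφ(t,x)) > 0 for all (t,x), and if (div v)(s,y) = 0 for all (s,y) then det(Dφ(t,x)) = 1 for all (t,x), i.e. the flow is volume preserving. -/

import Mathlib

/-!
Write `A t = D_x φ(t, x)` and `B t = D_z v(t, φ(t, x))`. Differentiating `∂_t φ = v(t, φ)` in `x`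
and exchanging the mixed partials of the `C²` map `φ` gives the variational equation `A' = B A`.
Since the determinant is multilinear in the rows, its derivative along `A' = B A` is
`∑ i, det (A with row i replaced by row i of B A) = tr B · det A` (Jacobi's formula), so `det A`
solves a scalar linear ODE with `det A 0 = 1`, whence `det A t = exp ∫₀ᵗ tr B`.
-/

namespace Matrix

variable {𝕜 : Type*} [NontriviallyNormedField 𝕜] {n : Type*} [Fintype n] [DecidableEq n]

variable (𝕜 n) in
noncomputable def detContinuousMultilinearMap :
    ContinuousMultilinearMap 𝕜 (fun _ : n => n → 𝕜) 𝕜 where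
  toMultilinearMap := (detRowAlternating : (n → 𝕜) [⋀^n]→ₗ[𝕜] 𝕜).toMultilinearMap
  cont := continuous_id.matrix_det

theorem hasDerivAt_det {M : 𝕜 → Matrix n n 𝕜} {M' : Matrix n n 𝕜} {t : 𝕜}
    (h : ∀ i j, HasDerivAt (fun s => M s i j) (M' i j) t) :
    HasDerivAt (fun s => (M s).det) (∑ i, ((M t).updateRow i (M' i)).det) t := by
  have hM : HasDerivAt (fun s => (M s : n → n → 𝕜)) (M' : n → n → 𝕜) t :=
    hasDerivAt_pi.2 fun i => hasDerivAt_pi.2 (h i)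
  have hdet := ((detContinuousMultilinearMap 𝕜 n).hasFDerivAt (M t)).comp_hasDerivAt t hM
  exact hdet.congr_deriv (ContinuousMultilinearMap.linearDeriv_apply _ _ _)

theorem sum_det_updateRow_mul {R : Type*} [CommRing R] (M N : Matrix n n R) :
    ∑ i, (M.updateRow i ((N * M) i)).det = N.trace * M.det := by
  have hrow : ∀ i, (M.updateRow i ((N * M) i)).det = N i i * M.det := fun i => by
    rw [show (N * M) i = ∑ k, N i k • M k by ext j; simp [mul_apply],
      det_updateRow_sum, smul_eq_mul]
  simp only [hrow, trace, diag, ← Finset.sum_mul]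

theorem hasDerivAt_det_of_hasDerivAt_mul {M : 𝕜 → Matrix n n 𝕜} {N : Matrix n n 𝕜} {t : 𝕜}
    (h : ∀ i j, HasDerivAt (fun s => M s i j) ((N * M t) i j) t) :
    HasDerivAt (fun s => (M s).det) (N.trace * (M t).det) t := by
  simpa only [sum_det_updateRow_mul] using hasDerivAt_det h

end Matrix

section OperatorDeterminant

variable {𝕜 : Type*} [NontriviallyNormedField 𝕜] [CompleteSpace 𝕜]
  {E : Type*} [NormedAddCommGroup E] [NormedSpace 𝕜 E] [FiniteDimensional 𝕜 E]

theorem ContinuousLinearMap.hasDerivAt_det {A : 𝕜 → E →L[𝕜] E} {B : E →L[𝕜] E} {t : 𝕜}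
    (hA : HasDerivAt A (B ∘L A t) t) :
    HasDerivAt (fun s => (A s).det) (LinearMap.trace 𝕜 E B * (A t).det) t := by
  let b := Module.finBasis 𝕜 E
  have hentry : ∀ i j, HasDerivAt (fun s => LinearMap.toMatrix b b (A s) i j)
      ((LinearMap.toMatrix b b B * LinearMap.toMatrix b b (A t)) i j) t := fun i j => by
    simp only [← LinearMap.toMatrix_comp, LinearMap.toMatrix_apply]
    have hcol : HasDerivAt (fun s => A s (b j)) (B (A t (b j))) t := by
      simpa using hA.clm_apply (hasDerivAt_const t (b j))
    exact (LinearMap.toContinuousLinearMap (b.coord i)).hasFDerivAt.comp_hasDerivAt t hcol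
  simpa only [LinearMap.det_toMatrix, ← LinearMap.trace_eq_matrix_trace] using
    Matrix.hasDerivAt_det_of_hasDerivAt_mul hentry

theorem LinearMap.continuous_trace_coe :
    Continuous fun A : E →L[𝕜] E => LinearMap.trace 𝕜 E A :=
  (LinearMap.trace 𝕜 E ∘ₗ ContinuousLinearMap.coeLM 𝕜).continuous_of_finiteDimensional

end OperatorDeterminant

theorem eq_mul_exp_integral_of_hasDerivAt {F g : ℝ → ℝ} (hg : Continuous g)
    (hF : ∀ t, HasDerivAt F (g t * F t) t) (t : ℝ) :
    F t = F 0 * Real.exp (∫ s in (0:ℝ)..t, g s) := by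
  set G : ℝ → ℝ := fun u => ∫ s in (0:ℝ)..u, g s
  have hG : ∀ u, HasDerivAt G (g u) u := fun u =>
    intervalIntegral.integral_hasDerivAt_right (hg.intervalIntegrable _ _)
      (hg.stronglyMeasurableAtFilter _ _) hg.continuousAt
  have hconst : ∀ u, HasDerivAt (fun w => F w * Real.exp (-G w)) 0 u := fun u =>
    ((hF u).mul (hG u).neg.exp).congr_deriv (by ring)
  have hF_eq := is_const_of_deriv_eq_zero (fun u => (hconst u).differentiableAt)
    (fun u => (hconst u).deriv) t 0
  simp only [G, intervalIntegral.integral_same, neg_zero, Real.exp_zero, mul_one,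
    Real.exp_neg] at hF_eq
  rw [← hF_eq, mul_assoc, inv_mul_cancel₀ (Real.exp_pos _).ne', mul_one]

section PartialDerivatives

open ContinuousLinearMap

variable {𝕜 : Type*} [NontriviallyNormedField 𝕜]
  {E : Type*} [NormedAddCommGroup E] [NormedSpace 𝕜 E]
  {G : Type*} [NormedAddCommGroup G] [NormedSpace 𝕜 G]

theorem DifferentiableAt.hasFDerivAt_partial_right {f : 𝕜 × E → G} {t : 𝕜} {x : E}
    (hf : DifferentiableAt 𝕜 f (t, x)) :
    HasFDerivAt (fun y => f (t, y)) (fderiv 𝕜 f (t, x) ∘L inr 𝕜 𝕜 E) x :=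
  hf.hasFDerivAt.comp x (hasFDerivAt_prodMk_right t x)

theorem DifferentiableAt.hasDerivAt_partial_left {f : 𝕜 × E → G} {t : 𝕜} {x : E}
    (hf : DifferentiableAt 𝕜 f (t, x)) :
    HasDerivAt (fun s => f (s, x)) (fderiv 𝕜 f (t, x) (1, 0)) t :=
  hf.hasFDerivAt.comp_hasDerivAt t ((hasDerivAt_id t).prodMk (hasDerivAt_const t x))

theorem ContDiff.continuous_fderiv_partial_right {f : 𝕜 × E → G} (hf : ContDiff 𝕜 1 f)
    {γ : 𝕜 → E} (hγ : Continuous γ) : Continuous fun s => fderiv 𝕜 (fun z => f (s, z)) (γ s) := by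
  have hf' := hf.differentiable one_ne_zero
  simp only [fun s => (hf' (s, γ s)).hasFDerivAt_partial_right.fderiv]
  exact ((compL 𝕜 E (𝕜 × E) G).flip (inr 𝕜 𝕜 E)).continuous.comp
    ((hf.continuous_fderiv one_ne_zero).comp (continuous_id.prodMk hγ))

end PartialDerivatives

section Flow

open ContinuousLinearMap

variable {E : Type*} [NormedAddCommGroup E] [NormedSpace ℝ E]
  {G : Type*} [NormedAddCommGroup G] [NormedSpace ℝ G]

/-- Equality of mixed partials: `∂ₜ (D_x f) = D_x (∂ₜ f)`, where `∂ₜ f (t, y)` is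
`fderiv ℝ f (t, y) (1, 0)`. -/
theorem ContDiff.hasDerivAt_fderiv_partial_right {f : ℝ × E → G} (hf : ContDiff ℝ 2 f)
    (t : ℝ) (x : E) :
    HasDerivAt (fun s => fderiv ℝ (fun y => f (s, y)) x)
      (fderiv ℝ (fun y => fderiv ℝ f (t, y) (1, 0)) x) t := by
  have hΦ : Differentiable ℝ (fderiv ℝ f) :=
    (hf.fderiv_right (by norm_num)).differentiable one_ne_zero
  have hΦt : HasDerivAt (fun s => fderiv ℝ f (s, x) ∘L inr ℝ ℝ E)
      (fderiv ℝ (fderiv ℝ f) (t, x) (1, 0) ∘L inr ℝ ℝ E) t :=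
    ((compL ℝ E (ℝ × E) G).flip (inr ℝ ℝ E)).hasFDerivAt.comp_hasDerivAt t
      (hΦ (t, x)).hasDerivAt_partial_left
  have hΦx : HasFDerivAt (fun y => fderiv ℝ f (t, y) (1, 0))
      (apply ℝ G ((1 : ℝ), (0 : E)) ∘L fderiv ℝ (fderiv ℝ f) (t, x) ∘L inr ℝ ℝ E) x :=
    (apply ℝ G ((1 : ℝ), (0 : E))).hasFDerivAt.comp x (hΦ (t, x)).hasFDerivAt_partial_right
  have hsymm : IsSymmSndFDerivAt ℝ f (t, x) := hf.contDiffAt.isSymmSndFDerivAt (by norm_num)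
  have hf' := hf.differentiable two_ne_zero
  convert hΦt using 1
  · ext s : 1
    exact (hf' (s, x)).hasFDerivAt_partial_right.fderiv
  · rw [hΦx.fderiv]
    ext w
    exact hsymm _ _

theorem hasDerivAt_fderiv_flow {v φ : ℝ × E → E} (hv : ContDiff ℝ 1 v) (hφ : ContDiff ℝ 2 φ)
    (hflow : ∀ t x, HasDerivAt (fun s => φ (s, x)) (v (t, φ (t, x))) t) (t : ℝ) (x : E) :
    HasDerivAt (fun s => fderiv ℝ (fun y => φ (s, y)) x)
      (fderiv ℝ (fun z => v (t, z)) (φ (t, x)) ∘L fderiv ℝ (fun y => φ (t, y)) x) t := by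
  have hφ' := hφ.differentiable two_ne_zero
  have htime : ∀ y, fderiv ℝ φ (t, y) (1, 0) = v (t, φ (t, y)) := fun y =>
    (hφ' (t, y)).hasDerivAt_partial_left.unique (hflow t y)
  have hvz : DifferentiableAt ℝ (fun z => v (t, z)) (φ (t, x)) :=
    (hv.differentiable one_ne_zero _).hasFDerivAt_partial_right.differentiableAt
  have hφx : DifferentiableAt ℝ (fun y => φ (t, y)) x :=
    (hφ' (t, x)).hasFDerivAt_partial_right.differentiableAt
  convert hφ.hasDerivAt_fderiv_partial_right t x using 1
  simp only [htime]
  exact (hvz.hasFDerivAt.comp x hφx.hasFDerivAt).fderiv.symm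

end Flow

section Liouville

variable {E : Type*} [NormedAddCommGroup E] [NormedSpace ℝ E] [FiniteDimensional ℝ E]

theorem det_fderiv_flow_eq_exp_integral {v φ : ℝ × E → E} (hv : ContDiff ℝ 1 v)
    (hφ0 : ∀ x, φ (0, x) = x)
    (hflow : ∀ t x, HasDerivAt (fun s => φ (s, x)) (v (t, φ (t, x))) t)
    (hφ : ContDiff ℝ 2 φ) (t : ℝ) (x : E) :
    (fderiv ℝ (fun y => φ (t, y)) x).det =
      Real.exp (∫ s in (0:ℝ)..t,
        LinearMap.trace ℝ E (fderiv ℝ (fun z => v (s, z)) (φ (s, x)) : E →ₗ[ℝ] E)) := by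
  have hdiv : Continuous fun s =>
      LinearMap.trace ℝ E (fderiv ℝ (fun z => v (s, z)) (φ (s, x)) : E →ₗ[ℝ] E) :=
    LinearMap.continuous_trace_coe.comp (hv.continuous_fderiv_partial_right
      (hφ.continuous.comp (continuous_id.prodMk continuous_const)))
  have hdet0 : (fderiv ℝ (fun y => φ (0, y)) x).det = 1 := by
    rw [show (fun y => φ (0, y)) = id from funext hφ0, fderiv_id]
    exact LinearMap.det_id
  have hjacobi := fun s =>
    ContinuousLinearMap.hasDerivAt_det (hasDerivAt_fderiv_flow hv hφ hflow s x)
  rw [eq_mul_exp_integral_of_hasDerivAt hdiv hjacobi t, hdet0, one_mul]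

end Liouville

theorem jacobian_det_of_flow_general
    (d : ℕ)
    (v : ℝ × EuclideanSpace ℝ (Fin d) → EuclideanSpace ℝ (Fin d))
    (hv : ContDiff ℝ 1 v)
    (φ : ℝ × EuclideanSpace ℝ (Fin d) → EuclideanSpace ℝ (Fin d))
    (hφ0 : ∀ x, φ (0, x) = x)
    (hφflow : ∀ t x, HasDerivAt (fun s => φ (s, x)) (v (t, φ (t, x))) t)
    (hφC2 : ContDiff ℝ 2 φ) :
    (∀ (t : ℝ) (x : EuclideanSpace ℝ (Fin d)),
        (fderiv ℝ (fun y => φ (t, y)) x).det =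
          Real.exp (∫ s in (0:ℝ)..t,
            LinearMap.trace ℝ (EuclideanSpace ℝ (Fin d))
              (fderiv ℝ (fun z => v (s, z)) (φ (s, x)) :
                EuclideanSpace ℝ (Fin d) →ₗ[ℝ] EuclideanSpace ℝ (Fin d)))) ∧
      (∀ (t : ℝ) (x : EuclideanSpace ℝ (Fin d)),
        0 < (fderiv ℝ (fun y => φ (t, y)) x).det) ∧
      ((∀ (s : ℝ) (y : EuclideanSpace ℝ (Fin d)),
          LinearMap.trace ℝ (EuclideanSpace ℝ (Fin d))
            (fderiv ℝ (fun z => v (s, z)) y :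
              EuclideanSpace ℝ (Fin d) →ₗ[ℝ] EuclideanSpace ℝ (Fin d)) = 0) →
        ∀ (t : ℝ) (x : EuclideanSpace ℝ (Fin d)),
          (fderiv ℝ (fun y => φ (t, y)) x).det = 1) := by
  have liouville := det_fderiv_flow_eq_exp_integral hv hφ0 hφflow hφC2
  refine ⟨liouville, fun t x => liouville t x ▸ Real.exp_pos _, fun hdiv t x => ?_⟩
  simp [liouville, hdiv]

/-- Liouville's formula for flows: if `v` is a jointly `C¹` time-dependent
vector field on `ℝ^d` and `φ` is a jointly `C²` flow of `v`, then
`det(Dφ(t,x)) = exp(∫₀ᵗ (div v)(s, φ(s,x)) ds)`; in particular the Jacobian determinant is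
positive, and if `div v ≡ 0` then `det(Dφ(t,x)) = 1` (the flow is volume preserving). -/
theorem jacobian_det_of_flow
    (d : ℕ) (hd : 1 ≤ d)
    (v : ℝ × EuclideanSpace ℝ (Fin d) → EuclideanSpace ℝ (Fin d))
    (hv : ContDiff ℝ 1 v)
    (φ : ℝ × EuclideanSpace ℝ (Fin d) → EuclideanSpace ℝ (Fin d))
    (hφ0 : ∀ x, φ (0, x) = x)
    (hφflow : ∀ t x, HasDerivAt (fun s => φ (s, x)) (v (t, φ (t, x))) t)
    (hφC2 : ContDiff ℝ 2 φ) :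
    (∀ (t : ℝ) (x : EuclideanSpace ℝ (Fin d)),
        (fderiv ℝ (fun y => φ (t, y)) x).det =
          Real.exp (∫ s in (0:ℝ)..t,
            LinearMap.trace ℝ (EuclideanSpace ℝ (Fin d))
              (fderiv ℝ (fun z => v (s, z)) (φ (s, x)) :
                EuclideanSpace ℝ (Fin d) →ₗ[ℝ] EuclideanSpace ℝ (Fin d)))) ∧
      (∀ (t : ℝ) (x : EuclideanSpace ℝ (Fin d)),
        0 < (fderiv ℝ (fun y => φ (t, y)) x).det) ∧
      ((∀ (s : ℝ) (y : EuclideanSpace ℝ (Fin d)),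
          LinearMap.trace ℝ (EuclideanSpace ℝ (Fin d))
            (fderiv ℝ (fun z => v (s, z)) y :
              EuclideanSpace ℝ (Fin d) →ₗ[ℝ] EuclideanSpace ℝ (Fin d)) = 0) →
        ∀ (t : ℝ) (x : EuclideanSpace ℝ (Fin d)),
          (fderiv ℝ (fun y => φ (t, y)) x).det = 1) :=
  jacobian_det_of_flow_general d v hv φ hφ0 hφflow hφC2
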